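/- Let n ≥ 2, let u be a unit vector of ℝ^n, R = { x ∈ ℝ^n : ⟨x, u⟩ = 0 }, and let D ⊆ R be compact convex with nonempty interior relative to R. Call K ⊆ ℝ^n a convex cap based on D (in direction u) if K is compact, convex, with nonempty interior, K ⊆ { x : ⟨x, u⟩ ≥ 0 }, K ∩ R = D, and for every x in the relative boundary of D inside R the line { x + t·u : t ∈ ℝ } meets K only at the point x. If C₀ and C₁ are convex caps based on D with C₀ ≠ C₁, then for every λ ∈ (0, 1), vol((1 − λ)•C₀ + λ•C₁) > (1 − λ)·vol(C₀) + λ·vol(C₁). (The volume is strictly convex on the set of convex caps with the same base.) -/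

import Mathlib

open scoped RealInnerProductSpace Pointwise
open MeasureTheory

/-- `K` is a convex cap based on `D` in direction `u`: `K` is compact, convex, with
nonempty interior, contained in the half-space `{⟨x, u⟩ ≥ 0}`, `K ∩ u^⊥ = D`, and for
every `x` in the relative boundary of `D` inside the hyperplane `R = u^⊥` (i.e. `x ∈ D`
but `x` is not in the interior of `D` relative to `R`) the line `{x + t·u}` meets `K`
only at the point `x`. -/
def IsConvexCap {n : ℕ} (u : EuclideanSpace ℝ (Fin n))
    (D K : Set (EuclideanSpace ℝ (Fin n))) : Prop :=
  IsCompact K ∧ Convex ℝ K ∧ (interior K).Nonempty ∧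
  K ⊆ {x : EuclideanSpace ℝ (Fin n) | 0 ≤ ⟪x, u⟫} ∧
  K ∩ {x : EuclideanSpace ℝ (Fin n) | ⟪x, u⟫ = 0} = D ∧
  ∀ x ∈ D, (¬ ∃ ε > (0 : ℝ), ∀ y : EuclideanSpace ℝ (Fin n),
      ⟪y, u⟫ = 0 → ‖y - x‖ < ε → y ∈ D) →
    ∀ t : ℝ, x + t • u ∈ K → t = 0

/-!
In the coordinates `ℝ × u^⊥`, a cap over the base `B` is the region between `B` and the graph
of its height function `h`, which is concave on `B` and vanishes on its relative boundary, so
`vol K = ∫_B h`. The height of `S = (1-λ) C₀ + λ C₁` dominates `(1-λ) h₀ + λ h₁`, hence equality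
of volumes forces `h_S = (1-λ) h₀ + λ h₁` on the interior of `B` (both sides are continuous
there). Since `S` contains the points `((1-λ) h₀ y + λ h₁ z, (1-λ) y + λ z)`, this gives
`(1-λ) h₀ y + λ h₁ z ≤ (1-λ) h₀ w + λ h₁ w` for `w = (1-λ) y + λ z`. Comparing slopes along
segments, this forces `h₀ - h₁` to be constant, and the constant vanishes because a cap has
height zero at the relative boundary.
-/

open Set Filter Topology

section MixingInequality

variable {I : Set ℝ} {p q : ℝ → ℝ} {a b : ℝ}

/- Apply the hypothesis to `x + δ` and `x - (a / b) δ`, whose combination is `x`; concavity of `q`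
then moves the slope on `[x - (a / b) δ, x]` to an interval of length `δ`, so that the
right-hand sides telescope along a grid of step `δ`. -/
theorem sub_le_sub_shift_of_combo_le (hq : ConcaveOn ℝ I q) (ha : 0 < a) (hb : 0 < b)
    (hab : a + b = 1)
    (H : ∀ x ∈ I, ∀ y ∈ I, a * p x + b * q y ≤ a * p (a * x + b * y) + b * q (a * x + b * y))
    {x δ : ℝ} (hδ : 0 < δ) (hxI : Icc (x - (a / b + 2) * δ) (x + δ) ⊆ I) :
    p (x + δ) - p x ≤ q (x - (a / b + 1) * δ) - q (x - (a / b + 2) * δ) := by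
  set κ := a / b with hκ
  have hκ0 : 0 < κ := div_pos ha hb
  have hbκ : b * κ = a := by rw [hκ]; field_simp
  have mem : ∀ t, x - (κ + 2) * δ ≤ t → t ≤ x + δ → t ∈ I := fun t h₁ h₂ => hxI ⟨h₁, h₂⟩
  have hmix : a * (p (x + δ) - p x) ≤ b * (q x - q (x - κ * δ)) := by
    have h := H (x + δ) (mem _ (by nlinarith) le_rfl) (x - κ * δ)
      (mem _ (by nlinarith) (by nlinarith))
    have hx : a * (x + δ) + b * (x - κ * δ) = x := by linear_combination x * hab - δ * hbκ
    rw [hx] at h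
    linarith
  have hslope : (q x - q (x - κ * δ)) / (κ * δ)
      ≤ (q (x - (κ + 1) * δ) - q (x - (κ + 2) * δ)) / δ := by
    have h₁ := hq.slope_anti_adjacent (mem (x - (κ + 1) * δ) (by nlinarith) (by nlinarith))
      (mem x (by nlinarith) (by linarith)) (by nlinarith : x - (κ + 1) * δ < x - κ * δ)
      (by nlinarith : x - κ * δ < x)
    have h₂ := hq.slope_anti_adjacent (mem (x - (κ + 2) * δ) le_rfl (by nlinarith))
      (mem (x - κ * δ) (by nlinarith) (by nlinarith))
      (by nlinarith : x - (κ + 2) * δ < x - (κ + 1) * δ)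
      (by nlinarith : x - (κ + 1) * δ < x - κ * δ)
    have e₁ : x - (x - κ * δ) = κ * δ := by ring
    have e₂ : x - (κ + 1) * δ - (x - (κ + 2) * δ) = δ := by ring
    rw [e₁] at h₁
    rw [e₂] at h₂
    exact h₁.trans h₂
  rw [div_le_div_iff₀ (by positivity) hδ] at hslope
  have hD : q x - q (x - κ * δ) ≤ κ * (q (x - (κ + 1) * δ) - q (x - (κ + 2) * δ)) :=
    le_of_mul_le_mul_right (by linarith) hδ
  refine le_of_mul_le_mul_left ?_ ha
  calc a * (p (x + δ) - p x) ≤ b * (q x - q (x - κ * δ)) := hmix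
    _ ≤ b * (κ * (q (x - (κ + 1) * δ) - q (x - (κ + 2) * δ))) := by gcongr
    _ = a * (q (x - (κ + 1) * δ) - q (x - (κ + 2) * δ)) := by rw [← hbκ]; ring

theorem sub_le_sub_of_combo_le (hI : IsOpen I) (hIc : Convex ℝ I) (hq : ConcaveOn ℝ I q)
    (ha : 0 < a) (hb : 0 < b) (hab : a + b = 1)
    (H : ∀ x ∈ I, ∀ y ∈ I, a * p x + b * q y ≤ a * p (a * x + b * y) + b * q (a * x + b * y))
    {c d : ℝ} (hc : c ∈ I) (hd : d ∈ I) (hcd : c < d) : p d - p c ≤ q d - q c := by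
  set δ : ℕ → ℝ := fun N => (d - c) / N
  set s : ℕ → ℝ := fun N => (a / b + 2) * δ N
  have hs : ∀ x, Tendsto (fun N => x - s N) atTop (𝓝 x) := fun x => by
    simpa using tendsto_const_nhds.sub
      ((tendsto_const_div_atTop_nhds_zero_nat (d - c)).const_mul (a / b + 2))
  have hqc := hq.continuousOn hI
  have hlim : Tendsto (fun N => q (d - s N) - q (c - s N)) atTop (𝓝 (q d - q c)) :=
    ((hqc.continuousAt (hI.mem_nhds hd)).tendsto.comp (hs d)).sub
      ((hqc.continuousAt (hI.mem_nhds hc)).tendsto.comp (hs c))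
  refine ge_of_tendsto hlim ?_
  filter_upwards [(hs c).eventually (hI.mem_nhds hc), eventually_gt_atTop 0] with N hN hN0
  have hδ : 0 < δ N := div_pos (by linarith) (by exact_mod_cast hN0)
  have hNδ : (N : ℝ) * δ N = d - c := mul_div_cancel₀ _ (by exact_mod_cast hN0.ne')
  have hsub : Icc (c - s N) d ⊆ I := hIc.ordConnected.out hN hd
  have step : ∀ i ∈ Finset.range N,
      p (c + ((i + 1 : ℕ) : ℝ) * δ N) - p (c + (i : ℝ) * δ N)
        ≤ q (c + ((i + 1 : ℕ) : ℝ) * δ N - s N) - q (c + (i : ℝ) * δ N - s N) := by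
    intro i hi
    have hi : (i : ℝ) + 1 ≤ N := by exact_mod_cast Finset.mem_range.1 hi
    have h := sub_le_sub_shift_of_combo_le hq ha hb hab H (x := c + i * δ N) hδ
      (fun t ht => hsub ⟨by nlinarith [ht.1], by nlinarith [ht.2]⟩)
    convert h using 3 <;> push_cast <;> ring
  have := Finset.sum_le_sum step
  rw [Finset.sum_range_sub (fun i : ℕ => p (c + (i : ℝ) * δ N)),
    Finset.sum_range_sub (fun i : ℕ => q (c + (i : ℝ) * δ N - s N))] at this
  simpa [hNδ] using this

theorem sub_eq_sub_of_combo_le {E : Type*} [NormedAddCommGroup E] [NormedSpace ℝ E]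
    {U : Set E} (hU : IsOpen U) (hUc : Convex ℝ U) {f g : E → ℝ} (hg : ConcaveOn ℝ U g)
    (ha : 0 < a) (hb : 0 < b) (hab : a + b = 1)
    (H : ∀ y ∈ U, ∀ z ∈ U, a * f y + b * g z ≤ a * f (a • y + b • z) + b * g (a • y + b • z))
    {y z : E} (hy : y ∈ U) (hz : z ∈ U) : f y - g y = f z - g z := by
  have key : ∀ y ∈ U, ∀ z ∈ U, f z - f y ≤ g z - g y := by
    intro y hy z hz
    let γ : ℝ →ᵃ[ℝ] E := AffineMap.lineMap y z
    have hγ : ∀ s t : ℝ, γ (a * s + b * t) = a • γ s + b • γ t := fun s t =>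
      Convex.combo_affine_apply hab
    have h := sub_le_sub_of_combo_le (p := f ∘ γ) (hU.preimage AffineMap.lineMap_continuous)
      (hUc.affine_preimage γ) (hg.comp_affineMap γ) ha hb hab
      (fun s hs t ht => by simpa only [Function.comp_apply, hγ] using H _ hs _ ht)
      (c := 0) (d := 1) (by simpa [γ] using hy) (by simpa [γ] using hz) one_pos
    simpa [γ] using h
  linarith [key y hy z hz, key z hz y hy]

end MixingInequality

section Caps

variable {E : Type*} [NormedAddCommGroup E] [NormedSpace ℝ E]

noncomputable def capHeight (K : Set (ℝ × E)) (y : E) : ℝ :=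
  sSup {t | (t, y) ∈ K}

structure IsCapOver (B : Set E) (K : Set (ℝ × E)) : Prop where
  isCompact : IsCompact K
  convex : Convex ℝ K
  nonneg : ∀ p ∈ K, 0 ≤ p.1
  snd_mem_of_fst_eq_zero : ∀ p ∈ K, p.1 = 0 → p.2 ∈ B
  zero_mem : ∀ y ∈ B, ((0 : ℝ), y) ∈ K
  eq_zero_of_notMem_interior : ∀ y ∈ B, y ∉ interior B → ∀ t, (t, y) ∈ K → t = 0

namespace IsCapOver

variable {B : Set E} {K K₀ K₁ : Set (ℝ × E)} {a b : ℝ}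

theorem fiber_eq_Icc (hK : IsCapOver B K) {y : E} (hy : y ∈ B) :
    {t | (t, y) ∈ K} = Icc 0 (capHeight K y) := by
  have hbdd : BddAbove {t | (t, y) ∈ K} :=
    (hK.isCompact.image continuous_fst).bddAbove.mono fun t ht => mem_image_of_mem Prod.fst ht
  have hclosed : IsClosed {t | (t, y) ∈ K} :=
    hK.isCompact.isClosed.preimage (Continuous.prodMk_left y)
  have htop : (capHeight K y, y) ∈ K := hclosed.csSup_mem ⟨0, hK.zero_mem y hy⟩ hbdd
  refine Subset.antisymm (fun t ht => ⟨hK.nonneg _ ht, le_csSup hbdd ht⟩) ?_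
  rintro t ⟨h0, h1⟩
  obtain ⟨a, b, ha, hb, hab, rfl⟩ : t ∈ segment ℝ 0 (capHeight K y) := by
    rw [segment_eq_Icc (h0.trans h1)]; exact ⟨h0, h1⟩
  have := hK.convex (hK.zero_mem y hy) htop ha hb hab
  simpa [Prod.smul_mk, Convex.combo_self hab] using this

theorem mem_fiber_iff (hK : IsCapOver B K) {y : E} (hy : y ∈ B) {t : ℝ} :
    (t, y) ∈ K ↔ t ∈ Icc 0 (capHeight K y) :=
  Set.ext_iff.1 (hK.fiber_eq_Icc hy) t

theorem height_mem (hK : IsCapOver B K) {y : E} (hy : y ∈ B) : (capHeight K y, y) ∈ K :=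
  (hK.mem_fiber_iff hy).2 ⟨(hK.mem_fiber_iff hy).1 (hK.zero_mem y hy) |>.2, le_rfl⟩

theorem height_nonneg (hK : IsCapOver B K) {y : E} (hy : y ∈ B) : 0 ≤ capHeight K y :=
  hK.nonneg _ (hK.height_mem hy)

theorem le_height (hK : IsCapOver B K) {y : E} (hy : y ∈ B) {t : ℝ} (ht : (t, y) ∈ K) :
    t ≤ capHeight K y :=
  ((hK.mem_fiber_iff hy).1 ht).2

theorem height_eq_zero_of_notMem_interior (hK : IsCapOver B K) {y : E} (hy : y ∈ B)
    (hy' : y ∉ interior B) :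
    capHeight K y = 0 :=
  hK.eq_zero_of_notMem_interior y hy hy' _ (hK.height_mem hy)

theorem concaveOn_height (hK : IsCapOver B K) (hB : Convex ℝ B) : ConcaveOn ℝ B (capHeight K) := by
  refine ⟨hB, fun y hy z hz a b ha hb hab => hK.le_height (hB hy hz ha hb hab) ?_⟩
  simpa [Prod.smul_mk] using hK.convex (hK.height_mem hy) (hK.height_mem hz) ha hb hab

theorem continuousOn_height [FiniteDimensional ℝ E] (hK : IsCapOver B K) (hB : Convex ℝ B) :
    ContinuousOn (capHeight K) (interior B) :=
  ((hK.concaveOn_height hB).subset interior_subset hB.interior).continuousOn isOpen_interior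

theorem snd_mem (hK : IsCapOver B K) (hBc : IsClosed B)
    (hint : (interior B).Nonempty) {p : ℝ × E} (hp : p ∈ K) : p.2 ∈ B := by
  obtain ⟨t, y⟩ := p
  obtain ⟨w, hw⟩ := hint
  by_contra hy
  obtain ⟨x, hxseg, hxB, hxi⟩ : ∃ x ∈ segment ℝ w y, x ∈ B ∧ x ∉ interior B := by
    by_contra! hsub
    obtain ⟨x, -, hxi, hxB⟩ := (convex_segment w y).isPreconnected _ _ isOpen_interior
      hBc.isOpen_compl (fun x hx => (em (x ∈ B)).imp (hsub x hx) id)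
      ⟨w, left_mem_segment ℝ w y, hw⟩ ⟨y, right_mem_segment ℝ w y, hy⟩
    exact hxB (interior_subset hxi)
  rw [segment_eq_image_lineMap] at hxseg
  obtain ⟨θ, hθ, rfl⟩ := hxseg
  have hmem : (θ * t, AffineMap.lineMap w y θ) ∈ K := by
    simpa [AffineMap.lineMap_apply, Prod.smul_mk] using
      hK.convex.lineMap_mem (hK.zero_mem w (interior_subset hw)) hp hθ
  rcases mul_eq_zero.1 (hK.eq_zero_of_notMem_interior _ hxB hxi _ hmem) with rfl | rfl
  · exact hxi (by simpa using hw)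
  · exact hy (hK.snd_mem_of_fst_eq_zero _ hp rfl)

theorem mem_iff (hK : IsCapOver B K) (hsnd : ∀ p ∈ K, p.2 ∈ B) {p : ℝ × E} :
    p ∈ K ↔ p.2 ∈ B ∧ p.1 ∈ Icc 0 (capHeight K p.2) :=
  ⟨fun hp => ⟨hsnd p hp, (hK.mem_fiber_iff (hsnd p hp)).1 hp⟩,
    fun ⟨hp, ht⟩ => (hK.mem_fiber_iff hp).2 ht⟩

theorem eq_of_eqOn_height {K' : Set (ℝ × E)} (hK : IsCapOver B K) (hK' : IsCapOver B K')
    (hsnd : ∀ p ∈ K, p.2 ∈ B) (hsnd' : ∀ p ∈ K', p.2 ∈ B)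
    (h : EqOn (capHeight K) (capHeight K') B) : K = K' := by
  ext p
  rw [hK.mem_iff hsnd, hK'.mem_iff hsnd']
  exact and_congr_right fun hp => by rw [h hp]

theorem nonpos_of_le_height (hK : IsCapOver B K) (hB : Convex ℝ B) (hint : (interior B).Nonempty)
    {x : E} (hx : x ∈ B) (hx' : x ∉ interior B) {c : ℝ}
    (hc : ∀ y ∈ interior B, c ≤ capHeight K y) : c ≤ 0 := by
  have hcompact : IsCompact (Prod.snd '' (K ∩ {p | c ≤ p.1})) :=
    (hK.isCompact.inter_right (isClosed_le continuous_const continuous_fst)).image continuous_snd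
  have hsub : interior B ⊆ Prod.snd '' (K ∩ {p | c ≤ p.1}) := fun y hy =>
    ⟨_, ⟨hK.height_mem (interior_subset hy), hc y hy⟩, rfl⟩
  have hxcl : x ∈ closure (interior B) := by
    rw [hB.closure_interior_eq_closure_of_nonempty_interior hint]
    exact subset_closure hx
  obtain ⟨⟨t, _⟩, ⟨htK, hct⟩, rfl⟩ := closure_minimal hsub hcompact.isClosed hxcl
  exact hK.eq_zero_of_notMem_interior _ hx hx' t htK ▸ hct

theorem smul_add_smul (h₀ : IsCapOver B K₀) (h₁ : IsCapOver B K₁) (hB : Convex ℝ B)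
    (hsnd₀ : ∀ p ∈ K₀, p.2 ∈ B) (hsnd₁ : ∀ p ∈ K₁, p.2 ∈ B)
    (ha : 0 < a) (hb : 0 < b) (hab : a + b = 1) : IsCapOver B (a • K₀ + b • K₁) where
  isCompact := (h₀.isCompact.smul a).add (h₁.isCompact.smul b)
  convex := (h₀.convex.smul a).add (h₁.convex.smul b)
  nonneg := by
    rintro _ ⟨_, ⟨p₀, hp₀, rfl⟩, _, ⟨p₁, hp₁, rfl⟩, rfl⟩
    have := h₀.nonneg p₀ hp₀
    have := h₁.nonneg p₁ hp₁
    simp only [Prod.fst_add, Prod.smul_fst, smul_eq_mul]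
    positivity
  snd_mem_of_fst_eq_zero := by
    rintro _ ⟨_, ⟨p₀, hp₀, rfl⟩, _, ⟨p₁, hp₁, rfl⟩, rfl⟩ h
    simp only [Prod.fst_add, Prod.smul_fst, smul_eq_mul] at h
    have h0 := h₀.nonneg p₀ hp₀
    have h1 := h₁.nonneg p₁ hp₁
    have hp₀0 : p₀.1 = 0 := by nlinarith
    have hp₁0 : p₁.1 = 0 := by nlinarith
    exact hB (h₀.snd_mem_of_fst_eq_zero p₀ hp₀ hp₀0) (h₁.snd_mem_of_fst_eq_zero p₁ hp₁ hp₁0)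
      ha.le hb.le hab
  zero_mem y hy := by
    simpa [Prod.smul_mk, Convex.combo_self hab] using
      add_mem_add (smul_mem_smul_set (a := a) (h₀.zero_mem y hy))
        (smul_mem_smul_set (a := b) (h₁.zero_mem y hy))
  eq_zero_of_notMem_interior := by
    rintro y hy hyi t ⟨_, ⟨⟨t₀, y₀⟩, hp₀, rfl⟩, _, ⟨⟨t₁, y₁⟩, hp₁, rfl⟩, h⟩
    simp only [Prod.smul_mk, Prod.mk_add_mk, Prod.mk.injEq, smul_eq_mul] at h
    obtain ⟨rfl, rfl⟩ := h
    have hy₀ : y₀ ∉ interior B := fun hi => hyi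
      (hB.combo_interior_self_mem_interior hi (hsnd₁ _ hp₁) ha hb.le hab)
    have hy₁ : y₁ ∉ interior B := fun hi => hyi (add_comm (a • y₀) _ ▸
      hB.combo_interior_self_mem_interior hi (hsnd₀ _ hp₀) hb ha.le (by linarith))
    rw [h₀.eq_zero_of_notMem_interior _ (hsnd₀ _ hp₀) hy₀ _ hp₀,
      h₁.eq_zero_of_notMem_interior _ (hsnd₁ _ hp₁) hy₁ _ hp₁]
    ring

theorem mul_height_add_mul_height_le (hS : IsCapOver B (a • K₀ + b • K₁)) (h₀ : IsCapOver B K₀)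
    (h₁ : IsCapOver B K₁) (hB : Convex ℝ B) (ha : 0 ≤ a) (hb : 0 ≤ b) (hab : a + b = 1)
    {y z : E} (hy : y ∈ B) (hz : z ∈ B) :
    a * capHeight K₀ y + b * capHeight K₁ z ≤ capHeight (a • K₀ + b • K₁) (a • y + b • z) :=
  hS.le_height (hB hy hz ha hb hab) <| by
    simpa [Prod.smul_mk] using
      add_mem_add (smul_mem_smul_set (a := a) (h₀.height_mem hy))
        (smul_mem_smul_set (a := b) (h₁.height_mem hz))

theorem eq_of_height_eq_combo (h₀ : IsCapOver B K₀) (h₁ : IsCapOver B K₁)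
    (hS : IsCapOver B (a • K₀ + b • K₁)) (hB : Convex ℝ B)
    (hint : (interior B).Nonempty) (hfr : ∃ x ∈ B, x ∉ interior B)
    (hsnd₀ : ∀ p ∈ K₀, p.2 ∈ B) (hsnd₁ : ∀ p ∈ K₁, p.2 ∈ B)
    (ha : 0 < a) (hb : 0 < b) (hab : a + b = 1)
    (heq : ∀ y ∈ interior B,
      capHeight (a • K₀ + b • K₁) y = a * capHeight K₀ y + b * capHeight K₁ y) :
    K₀ = K₁ := by
  have H : ∀ y ∈ interior B, ∀ z ∈ interior B,
      a * capHeight K₀ y + b * capHeight K₁ z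
        ≤ a * capHeight K₀ (a • y + b • z) + b * capHeight K₁ (a • y + b • z) := by
    intro y hy z hz
    rw [← heq _ (hB.interior hy hz ha.le hb.le hab)]
    exact hS.mul_height_add_mul_height_le h₀ h₁ hB ha.le hb.le hab (interior_subset hy)
      (interior_subset hz)
  have hconst : ∀ y ∈ interior B, ∀ z ∈ interior B,
      capHeight K₀ y - capHeight K₁ y = capHeight K₀ z - capHeight K₁ z := fun y hy z hz =>
    sub_eq_sub_of_combo_le isOpen_interior hB.interior
      ((h₁.concaveOn_height hB).subset interior_subset hB.interior) ha hb hab H hy hz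
  obtain ⟨w, hw⟩ := hint
  obtain ⟨x, hx, hx'⟩ := hfr
  have hle : capHeight K₀ w - capHeight K₁ w ≤ 0 :=
    h₀.nonpos_of_le_height hB ⟨w, hw⟩ hx hx' fun y hy => by
      linarith [hconst y hy w hw, h₁.height_nonneg (interior_subset hy)]
  have hge : -(capHeight K₀ w - capHeight K₁ w) ≤ 0 :=
    h₁.nonpos_of_le_height hB ⟨w, hw⟩ hx hx' fun y hy => by
      linarith [hconst y hy w hw, h₀.height_nonneg (interior_subset hy)]
  refine h₀.eq_of_eqOn_height h₁ hsnd₀ hsnd₁ fun y hy => ?_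
  by_cases hyi : y ∈ interior B
  · linarith [hconst y hyi w hw]
  · rw [h₀.height_eq_zero_of_notMem_interior hy hyi, h₁.height_eq_zero_of_notMem_interior hy hyi]

section Measure

variable [FiniteDimensional ℝ E] [MeasurableSpace E] [BorelSpace E] (μ : Measure E)
  [μ.IsAddHaarMeasure]

theorem prod_apply_eq_lintegral_height (hK : IsCapOver B K) (hsnd : ∀ p ∈ K, p.2 ∈ B) :
    (volume.prod μ) K = ∫⁻ y in interior B, ENNReal.ofReal (capHeight K y) ∂μ := by
  rw [Measure.prod_apply_symm hK.isCompact.isClosed.measurableSet,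
    ← lintegral_indicator isOpen_interior.measurableSet]
  refine lintegral_congr fun y => ?_
  by_cases hy : y ∈ B
  · rw [show (fun t => (t, y)) ⁻¹' K = Icc 0 (capHeight K y) from hK.fiber_eq_Icc hy,
      Real.volume_Icc, sub_zero]
    by_cases hyi : y ∈ interior B
    · rw [indicator_of_mem hyi]
    · rw [indicator_of_notMem hyi, hK.height_eq_zero_of_notMem_interior hy hyi, ENNReal.ofReal_zero]
  · have : (fun t => (t, y)) ⁻¹' K = ∅ :=
      eq_empty_of_forall_notMem fun t ht => hy (hsnd _ ht)
    rw [this, indicator_of_notMem (fun hyi => hy (interior_subset hyi)), measure_empty]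

theorem lintegral_combo_height (h₀ : IsCapOver B K₀) (h₁ : IsCapOver B K₁) (hB : Convex ℝ B)
    (hsnd₀ : ∀ p ∈ K₀, p.2 ∈ B) (hsnd₁ : ∀ p ∈ K₁, p.2 ∈ B) (ha : 0 ≤ a) (hb : 0 ≤ b) :
    ∫⁻ y in interior B, ENNReal.ofReal (a * capHeight K₀ y + b * capHeight K₁ y) ∂μ
      = ENNReal.ofReal a * (volume.prod μ) K₀ + ENNReal.ofReal b * (volume.prod μ) K₁ := by
  have hU : MeasurableSet (interior B) := isOpen_interior.measurableSet
  have hsplit : ∀ y ∈ interior B, ENNReal.ofReal (a * capHeight K₀ y + b * capHeight K₁ y)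
      = ENNReal.ofReal a * ENNReal.ofReal (capHeight K₀ y)
        + ENNReal.ofReal b * ENNReal.ofReal (capHeight K₁ y) := fun y hy => by
    have := h₀.height_nonneg (interior_subset hy)
    have := h₁.height_nonneg (interior_subset hy)
    rw [ENNReal.ofReal_add (by positivity) (by positivity), ENNReal.ofReal_mul ha,
      ENNReal.ofReal_mul hb]
  have hmeas : AEMeasurable (fun y => ENNReal.ofReal a * ENNReal.ofReal (capHeight K₀ y))
      (μ.restrict (interior B)) :=
    ((ENNReal.continuous_ofReal.comp_continuousOn (h₀.continuousOn_height hB)).aemeasurable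
      hU).const_mul _
  rw [setLIntegral_congr_fun hU hsplit, lintegral_add_left' hmeas,
    lintegral_const_mul' _ _ ENNReal.ofReal_ne_top, lintegral_const_mul' _ _ ENNReal.ofReal_ne_top,
    h₀.prod_apply_eq_lintegral_height μ hsnd₀, h₁.prod_apply_eq_lintegral_height μ hsnd₁]

theorem height_eq_combo_of_prod_le (h₀ : IsCapOver B K₀) (h₁ : IsCapOver B K₁)
    (hS : IsCapOver B (a • K₀ + b • K₁)) (hB : Convex ℝ B)
    (hsnd₀ : ∀ p ∈ K₀, p.2 ∈ B) (hsnd₁ : ∀ p ∈ K₁, p.2 ∈ B)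
    (hsndS : ∀ p ∈ a • K₀ + b • K₁, p.2 ∈ B) (ha : 0 < a) (hb : 0 < b) (hab : a + b = 1)
    (hle : (volume.prod μ) (a • K₀ + b • K₁)
      ≤ ENNReal.ofReal a * (volume.prod μ) K₀ + ENNReal.ofReal b * (volume.prod μ) K₁) :
    ∀ y ∈ interior B,
      capHeight (a • K₀ + b • K₁) y = a * capHeight K₀ y + b * capHeight K₁ y := by
  have hU : MeasurableSet (interior B) := isOpen_interior.measurableSet
  have hint := h₀.lintegral_combo_height μ h₁ hB hsnd₀ hsnd₁ ha.le hb.le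
  have hcombo_le : ∀ y ∈ interior B,
      a * capHeight K₀ y + b * capHeight K₁ y ≤ capHeight (a • K₀ + b • K₁) y := fun y hy => by
    simpa [Convex.combo_self hab] using hS.mul_height_add_mul_height_le h₀ h₁ hB ha.le hb.le hab
      (interior_subset hy) (interior_subset hy)
  have hfinite : ENNReal.ofReal a * (volume.prod μ) K₀ + ENNReal.ofReal b * (volume.prod μ) K₁
      ≠ ⊤ := ENNReal.add_ne_top.2
    ⟨ENNReal.mul_ne_top ENNReal.ofReal_ne_top h₀.isCompact.measure_lt_top.ne,
      ENNReal.mul_ne_top ENNReal.ofReal_ne_top h₁.isCompact.measure_lt_top.ne⟩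
  have hae := ae_eq_of_ae_le_of_lintegral_le
    (ae_restrict_of_forall_mem hU fun y hy => ENNReal.ofReal_le_ofReal (hcombo_le y hy))
    (hint ▸ hfinite)
    ((ENNReal.continuous_ofReal.comp_continuousOn (hS.continuousOn_height hB)).aemeasurable hU)
    (hint ▸ hS.prod_apply_eq_lintegral_height μ hsndS ▸ hle)
  intro y hy
  have hEq := Measure.eqOn_open_of_ae_eq hae isOpen_interior
    (ENNReal.continuous_ofReal.comp_continuousOn
      ((continuousOn_const.mul (h₀.continuousOn_height hB)).add
        (continuousOn_const.mul (h₁.continuousOn_height hB))))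
    (ENNReal.continuous_ofReal.comp_continuousOn (hS.continuousOn_height hB)) hy
  have := h₀.height_nonneg (interior_subset hy)
  have := h₁.height_nonneg (interior_subset hy)
  exact (ENNReal.ofReal_eq_ofReal_iff (hS.height_nonneg (interior_subset hy))
    (by positivity)).1 hEq.symm

theorem lt_prod_smul_add_smul [Nontrivial E]
    (hBc : IsCompact B) (hB : Convex ℝ B) (hint : (interior B).Nonempty)
    (h₀ : IsCapOver B K₀) (h₁ : IsCapOver B K₁) (hne : K₀ ≠ K₁)
    (ha : 0 < a) (hb : 0 < b) (hab : a + b = 1) :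
    ENNReal.ofReal a * (volume.prod μ) K₀ + ENNReal.ofReal b * (volume.prod μ) K₁
      < (volume.prod μ) (a • K₀ + b • K₁) := by
  have hsnd₀ : ∀ p ∈ K₀, p.2 ∈ B := fun p => h₀.snd_mem hBc.isClosed hint
  have hsnd₁ : ∀ p ∈ K₁, p.2 ∈ B := fun p => h₁.snd_mem hBc.isClosed hint
  have hS := h₀.smul_add_smul h₁ hB hsnd₀ hsnd₁ ha hb hab
  have hfr : ∃ x ∈ B, x ∉ interior B := by
    obtain ⟨x, hx⟩ := nonempty_frontier_iff.2 ⟨hint.mono interior_subset, hBc.ne_univ⟩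
    exact ⟨x, hBc.isClosed.frontier_subset hx, hx.2⟩
  refine lt_of_not_ge fun hle => hne ?_
  exact h₀.eq_of_height_eq_combo h₁ hS hB hint hfr hsnd₀ hsnd₁ ha hb hab
    (h₀.height_eq_combo_of_prod_le μ h₁ hS hB hsnd₀ hsnd₁
      (fun p => hS.snd_mem hBc.isClosed hint) ha hb hab hle)

end Measure

end IsCapOver

end Caps

section Chart

variable {F : Type*} [NormedAddCommGroup F] [InnerProductSpace ℝ F] {u : F}

noncomputable def unitDecomposition (hu : ‖u‖ = 1) : WithLp 2 (ℝ × (ℝ ∙ u)ᗮ) ≃ₗᵢ[ℝ] F :=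
  (LinearIsometryEquiv.withLpProdCongr 2 (LinearIsometryEquiv.toSpanUnitSingleton u hu)
    (LinearIsometryEquiv.refl ℝ (ℝ ∙ u)ᗮ)).trans (ℝ ∙ u).orthogonalDecomposition.symm

noncomputable def unitChart (hu : ‖u‖ = 1) : (ℝ × (ℝ ∙ u)ᗮ) ≃L[ℝ] F :=
  (WithLp.prodContinuousLinearEquiv 2 ℝ ℝ (ℝ ∙ u)ᗮ).symm.trans
    (unitDecomposition hu).toContinuousLinearEquiv

theorem unitChart_apply (hu : ‖u‖ = 1) (p : ℝ × (ℝ ∙ u)ᗮ) :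
    unitChart hu p = p.1 • u + p.2 := by
  simp [unitChart, unitDecomposition]

theorem inner_unitChart (hu : ‖u‖ = 1) (p : ℝ × (ℝ ∙ u)ᗮ) : ⟪unitChart hu p, u⟫ = p.1 := by
  rw [unitChart_apply, inner_add_left, inner_smul_left, real_inner_self_eq_norm_sq, hu,
    Submodule.mem_orthogonal_singleton_iff_inner_left.1 p.2.2]
  simp

theorem measurePreserving_unitChart [FiniteDimensional ℝ F] [MeasurableSpace F] [BorelSpace F]
    (hu : ‖u‖ = 1) : MeasurePreserving (unitChart hu) :=
  (unitDecomposition hu).measurePreserving.comp (WithLp.volume_preserving_toLp ℝ (ℝ ∙ u)ᗮ)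

theorem preimage_unitChart_smul_add_smul (hu : ‖u‖ = 1) (a b : ℝ) (C₀ C₁ : Set F) :
    unitChart hu ⁻¹' (a • C₀ + b • C₁) = a • unitChart hu ⁻¹' C₀ + b • unitChart hu ⁻¹' C₁ := by
  simp only [← ContinuousLinearEquiv.image_symm_eq_preimage, Set.image_add, image_smul_setₛₗ,
    RingHom.id_apply]

theorem mem_interior_preimage_coe_iff {D : Set F} {y : (ℝ ∙ u)ᗮ} :
    y ∈ interior ((↑) ⁻¹' D : Set (ℝ ∙ u)ᗮ) ↔
      ∃ ε > (0 : ℝ), ∀ z : F, ⟪z, u⟫ = 0 → ‖z - y‖ < ε → z ∈ D := by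
  simp only [mem_interior_iff_mem_nhds, Metric.mem_nhds_iff, subset_def, Metric.mem_ball,
    Subtype.forall, Submodule.mem_orthogonal_singleton_iff_inner_left, mem_preimage, dist_eq_norm]
  rfl

end Chart

theorem nontrivial_orthogonal_span_singleton {n : ℕ} (hn : 2 ≤ n)
    {u : EuclideanSpace ℝ (Fin n)} (hu : u ≠ 0) : Nontrivial (ℝ ∙ u)ᗮ := by
  refine Module.nontrivial_of_finrank_pos (R := ℝ) ?_
  have := (ℝ ∙ u).finrank_add_finrank_orthogonal
  rw [finrank_span_singleton hu, finrank_euclideanSpace_fin] at this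
  omega

theorem IsConvexCap.isCapOver_preimage {n : ℕ} {u : EuclideanSpace ℝ (Fin n)} (hu : ‖u‖ = 1)
    {D C : Set (EuclideanSpace ℝ (Fin n))} (hC : IsConvexCap u D C) :
    IsCapOver ((↑) ⁻¹' D : Set (ℝ ∙ u)ᗮ) (unitChart hu ⁻¹' C) := by
  obtain ⟨hcp, hcv, -, hhalf, hbase, hbd⟩ := hC
  have hD : ∀ x ∈ C, ⟪x, u⟫ = 0 → x ∈ D := fun x hx h => hbase ▸ ⟨hx, h⟩
  refine ⟨(unitChart hu).toHomeomorph.isCompact_preimage.2 hcp,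
    hcv.is_linear_preimage (unitChart hu).toLinearMap.isLinear, fun p hp => ?_, ?_,
    fun y hy => ?_, fun y hy hyi t ht => ?_⟩
  · simpa [inner_unitChart] using hhalf hp
  · rintro ⟨t, y⟩ hp (rfl : t = 0)
    simpa [unitChart_apply] using hD _ hp (by simp [inner_unitChart])
  · simpa [unitChart_apply] using (hbase ▸ inter_subset_left : D ⊆ C) hy
  · refine hbd y hy (mt mem_interior_preimage_coe_iff.2 hyi) t ?_
    simpa [unitChart_apply, add_comm] using ht

/-- The volume is strictly convex on the set of convex caps with the
same base: if `C₀ ≠ C₁` are convex caps based on the same compact convex set `D ⊆ u^⊥`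
with nonempty interior relative to `u^⊥`, then for every `λ ∈ (0, 1)`,
`vol((1 − λ)•C₀ + λ•C₁) > (1 − λ)·vol C₀ + λ·vol C₁`. -/
theorem stmt15 (n : ℕ) (hn : 2 ≤ n) (u : EuclideanSpace ℝ (Fin n)) (hu : ‖u‖ = 1)
    (D : Set (EuclideanSpace ℝ (Fin n))) (hDcp : IsCompact D) (hDcv : Convex ℝ D)
    (hDR : D ⊆ {x : EuclideanSpace ℝ (Fin n) | ⟪x, u⟫ = 0})
    (hDint : ∃ x ∈ D, ∃ ε > (0 : ℝ), ∀ y : EuclideanSpace ℝ (Fin n),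
        ⟪y, u⟫ = 0 → ‖y - x‖ < ε → y ∈ D)
    (C₀ C₁ : Set (EuclideanSpace ℝ (Fin n)))
    (h0cap : IsConvexCap u D C₀) (h1cap : IsConvexCap u D C₁) (hne : C₀ ≠ C₁)
    (l : ℝ) (hl0 : 0 < l) (hl1 : l < 1) :
    ENNReal.ofReal (1 - l) * volume C₀ + ENNReal.ofReal l * volume C₁
      < volume ((1 - l) • C₀ + l • C₁) := by
  have := nontrivial_orthogonal_span_singleton hn (norm_ne_zero_iff.1 (hu ▸ one_ne_zero))
  set B : Set (ℝ ∙ u)ᗮ := (↑) ⁻¹' D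
  have hBc : IsCompact B :=
    (Submodule.isClosed_orthogonal _).isClosedEmbedding_subtypeVal.isCompact_preimage hDcp
  have hBcv : Convex ℝ B := hDcv.linear_preimage (ℝ ∙ u)ᗮ.subtype
  have hBint : (interior B).Nonempty := by
    obtain ⟨x, hx, hxint⟩ := hDint
    exact ⟨⟨x, Submodule.mem_orthogonal_singleton_iff_inner_left.2 (hDR hx)⟩,
      mem_interior_preimage_coe_iff.2 hxint⟩
  have hvol : ∀ S, IsCompact S → volume (unitChart hu ⁻¹' S) = volume S := fun S hS =>
    (measurePreserving_unitChart hu).measure_preimage hS.isClosed.measurableSet.nullMeasurableSet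
  have key := IsCapOver.lt_prod_smul_add_smul volume hBc hBcv hBint
    (h0cap.isCapOver_preimage hu) (h1cap.isCapOver_preimage hu)
    (fun h => hne ((unitChart hu).surjective.preimage_injective h)) (sub_pos.2 hl1) hl0
    (sub_add_cancel 1 l)
  rwa [← preimage_unitChart_smul_add_smul, ← Measure.volume_eq_prod, hvol _ h0cap.1,
    hvol _ h1cap.1, hvol _ ((h0cap.1.smul _).add (h1cap.1.smul _))] at key
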